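/- Let A = A^k_3(r) with 1 ≤ k ≤ 3 and r ≥ 2, and let X ∈ L(A) have dimension 1. Then X is modular in L(A) if and only if X = H_i ∩ H_j for some 1 ≤ i < j ≤ k (intersections of two coordinate hyperplanes among the first k). -/

import Mathlib

open Submodule

/-- The intersection lattice of the arrangement `A` with ambient space `Z`:
all subspaces of the form `Z ⊓ sInf S` for `S ⊆ A` (the empty intersection gives `Z`). -/
def ArrLatIn {V : Type*} [AddCommGroup V] [Module ℂ V] (Z : Submodule ℂ V)
    (A : Set (Submodule ℂ V)) : Set (Submodule ℂ V) :=
  {X | ∃ S ⊆ A, X = Z ⊓ sInf S}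

/-- `X` is a modular element of the lattice `ℒ` (ordered by reverse inclusion):
`X ∈ ℒ` and `X + Y ∈ ℒ` for every `Y ∈ ℒ`. -/
def ModularIn {V : Type*} [AddCommGroup V] [Module ℂ V]
    (ℒ : Set (Submodule ℂ V)) (X : Submodule ℂ V) : Prop :=
  X ∈ ℒ ∧ ∀ Y ∈ ℒ, X ⊔ Y ∈ ℒ

/-- The restriction of the arrangement `A` to the subspace `Z`:
the hyperplanes `Z ∩ H` for `H ∈ A` with `Z ⊄ H`. -/
def Restrict {V : Type*} [AddCommGroup V] [Module ℂ V]
    (A : Set (Submodule ℂ V)) (Z : Submodule ℂ V) : Set (Submodule ℂ V) :=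
  {W | ∃ H ∈ A, ¬ Z ≤ H ∧ W = Z ⊓ H}

/-- A (lattice of subspaces ordered by reverse inclusion) is supersolvable if it admits a
maximal chain `C 0 > C 1 > ... > C n` (top to bottom) consisting of modular elements. -/
def LatSupersolvable {V : Type*} [AddCommGroup V] [Module ℂ V]
    (ℒ : Set (Submodule ℂ V)) : Prop :=
  ∃ n, ∃ C : Fin (n + 1) → Submodule ℂ V,
    (∀ i, ModularIn ℒ (C i)) ∧
    (∀ W ∈ ℒ, W ≤ C 0) ∧
    (∀ W ∈ ℒ, C (Fin.last n) ≤ W) ∧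
    (∀ i : Fin n, C i.succ < C i.castSucc) ∧
    (∀ i : Fin n, ∀ W ∈ ℒ, ¬(C i.succ < W ∧ W < C i.castSucc))

/-- The product of two arrangements. -/
def ProdArr {V₁ V₂ : Type*} [AddCommGroup V₁] [Module ℂ V₁] [AddCommGroup V₂] [Module ℂ V₂]
    (A₁ : Set (Submodule ℂ V₁)) (A₂ : Set (Submodule ℂ V₂)) : Set (Submodule ℂ (V₁ × V₂)) :=
  ((fun H => H.prod (⊤ : Submodule ℂ V₂)) '' A₁) ∪
    ((fun H => (⊤ : Submodule ℂ V₁).prod H) '' A₂)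

/-- The coordinate hyperplane `ker x_i` in `ℂ^ℓ`. -/
noncomputable def coordH (ℓ : ℕ) (i : Fin ℓ) : Submodule ℂ (Fin ℓ → ℂ) :=
  LinearMap.ker (LinearMap.proj i : (Fin ℓ → ℂ) →ₗ[ℂ] ℂ)

/-- The hyperplane `ker (x_i - ζ x_j)` in `ℂ^ℓ`. -/
noncomputable def diffH (ℓ : ℕ) (i j : Fin ℓ) (ζ : ℂ) : Submodule ℂ (Fin ℓ → ℂ) :=
  LinearMap.ker ((LinearMap.proj i : (Fin ℓ → ℂ) →ₗ[ℂ] ℂ) - ζ • (LinearMap.proj j))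

/-- The intermediate arrangement `A^k_ℓ(r)`: the first `k` coordinate hyperplanes together with
all hyperplanes `ker (x_i - ζ x_j)` for `i < j` and `ζ` an `r`-th root of unity. -/
def interArr (r ℓ k : ℕ) : Set (Submodule ℂ (Fin ℓ → ℂ)) :=
  {H | ∃ i : Fin ℓ, (i : ℕ) < k ∧ H = coordH ℓ i} ∪
    {H | ∃ i j : Fin ℓ, i < j ∧ ∃ ζ : ℂ, ζ ^ r = 1 ∧ H = diffH ℓ i j ζ}

/-- The Boolean subarrangement `B^k_ℓ` of the first `k` coordinate hyperplanes of `ℂ^ℓ`. -/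
def boolArr (ℓ k : ℕ) : Set (Submodule ℂ (Fin ℓ → ℂ)) :=
  {H | ∃ i : Fin ℓ, (i : ℕ) < k ∧ H = coordH ℓ i}

/-- The degree-one polynomial corresponding to a linear form on `ℂ^n`. -/
noncomputable def linPoly {n : ℕ} (f : (Fin n → ℂ) →ₗ[ℂ] ℂ) : MvPolynomial (Fin n) ℂ :=
  ∑ i, MvPolynomial.C (f (Pi.single i 1)) * MvPolynomial.X i

/-- The module of derivations `D(Q) = {θ | θ(Q) ∈ Q·S}` is free with a homogeneous basis
`θ 0, ..., θ (n-1)` of polynomial degrees `e 0, ..., e (n-1)`. -/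
def IsFreeWithExponents (n : ℕ) (Q : MvPolynomial (Fin n) ℂ) (e : Fin n → ℕ) : Prop :=
  ∃ θ : Fin n → Derivation ℂ (MvPolynomial (Fin n) ℂ) (MvPolynomial (Fin n) ℂ),
    (∀ i, θ i Q ∈ Ideal.span {Q}) ∧
    (∀ i j, ((θ i) (MvPolynomial.X j)).IsHomogeneous (e i)) ∧
    (∀ c : Fin n → MvPolynomial (Fin n) ℂ, (∑ i, c i • θ i) = 0 → ∀ i, c i = 0) ∧
    (∀ η : Derivation ℂ (MvPolynomial (Fin n) ℂ) (MvPolynomial (Fin n) ℂ),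
      η Q ∈ Ideal.span {Q} →
      ∃ c : Fin n → MvPolynomial (Fin n) ℂ, η = ∑ i, c i • θ i)

/-- An arrangement is irreducible if it is not a product of two nonempty arrangements, i.e.
there is no nontrivial direct sum decomposition of the ambient space such that every
hyperplane contains one of the two summands. -/
def IsIrreducibleArr {V : Type*} [AddCommGroup V] [Module ℂ V]
    (A : Set (Submodule ℂ V)) : Prop :=
  ¬ ∃ V₁ V₂ : Submodule ℂ V, V₁ ≠ ⊥ ∧ V₂ ≠ ⊥ ∧ V₁ ⊓ V₂ = ⊥ ∧ V₁ ⊔ V₂ = ⊤ ∧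
      ∀ H ∈ A, V₁ ≤ H ∨ V₂ ≤ H

/-- The restriction of `A` to the hyperplane `H` is linearly isomorphic to the intermediate
arrangement `A^{k'}_{ℓ'}(r)`. -/
def RestrEquiv (r ℓ : ℕ) (A : Set (Submodule ℂ (Fin ℓ → ℂ))) (H : Submodule ℂ (Fin ℓ → ℂ))
    (ℓ' k' : ℕ) : Prop :=
  ∃ φ : (Fin ℓ' → ℂ) →ₗ[ℂ] (Fin ℓ → ℂ), Function.Injective φ ∧ LinearMap.range φ = H ∧
    Restrict A H = (fun K => Submodule.map φ K) '' interArr r ℓ' k'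

/-!
In rank three, a line `X` of the intersection lattice is modular exactly when every other
line `Y` of the lattice lies together with `X` on some hyperplane of the arrangement.

A line spanned by a vector `x` with at most one zero coordinate is not modular: one finds a
line `⟨y⟩` of the lattice such that `x` and `y` have no common zero coordinate and no vanishing
`2 × 2` minor, and such a pair lies on no hyperplane `ker x_i` or `ker (x_i - ζ x_j)`.
For the axis `H_i ∩ H_j` one takes `Y = ⟨e_i⟩`; then `X + Y = H_j`, so `H_j` must belong to
the arrangement, i.e. `j < k`.

Conversely, let `i, j < k` and let `⟨y⟩` be a line of the lattice outside `H_i` and `H_j`.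
If `y_i` were not a root-of-unity multiple of another coordinate of `y`, then `e_i` would lie
on every hyperplane through `y`, hence in `⟨y⟩`. Chaining two such relations shows that
`y_i / y_j` is an `r`-th root of unity `ζ`, so `ker (x_i - ζ x_j)` contains both `⟨y⟩` and
`H_i ∩ H_j`.
-/

open Module

section RankThree

variable {V : Type*} [AddCommGroup V] [Module ℂ V] {A : Set (Submodule ℂ V)}

lemma mem_arrLatIn_top_iff {X : Submodule ℂ V} :
    X ∈ ArrLatIn ⊤ A ↔ ∃ S ⊆ A, X = sInf S := by
  simp [ArrLatIn]

lemma top_mem_arrLatIn : (⊤ : Submodule ℂ V) ∈ ArrLatIn ⊤ A :=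
  mem_arrLatIn_top_iff.2 ⟨∅, Set.empty_subset A, sInf_empty.symm⟩

lemma mem_arrLatIn_of_mem {H : Submodule ℂ V} (hH : H ∈ A) : H ∈ ArrLatIn ⊤ A :=
  mem_arrLatIn_top_iff.2 ⟨{H}, Set.singleton_subset_iff.2 hH, sInf_singleton.symm⟩

lemma inf_mem_arrLatIn {H H' : Submodule ℂ V} (hH : H ∈ A) (hH' : H' ∈ A) :
    H ⊓ H' ∈ ArrLatIn ⊤ A :=
  mem_arrLatIn_top_iff.2
    ⟨{H, H'}, Set.insert_subset hH (Set.singleton_subset_iff.2 hH'), sInf_pair.symm⟩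

lemma mem_of_forall_mem_imp {X : Submodule ℂ V} (hX : X ∈ ArrLatIn ⊤ A) {y u : V} (hy : y ∈ X)
    (h : ∀ H ∈ A, y ∈ H → u ∈ H) : u ∈ X := by
  obtain ⟨S, hSA, rfl⟩ := mem_arrLatIn_top_iff.1 hX
  exact mem_sInf.2 fun H hH => h H (hSA hH) (mem_sInf.1 hy H hH)

lemma exists_mem_le_of_mem_arrLatIn {Z : Submodule ℂ V} (hZ : Z ∈ ArrLatIn ⊤ A) (hZ' : Z ≠ ⊤) :
    ∃ H ∈ A, Z ≤ H := by
  obtain ⟨S, hSA, rfl⟩ := mem_arrLatIn_top_iff.1 hZ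
  obtain ⟨H, hH⟩ : S.Nonempty := Set.nonempty_iff_ne_empty.2 (by rintro rfl; exact hZ' sInf_empty)
  exact ⟨H, hSA hH, sInf_le hH⟩

lemma exists_eq_span_singleton_of_finrank_eq_one {X : Submodule ℂ V} (hX : finrank ℂ X = 1) :
    ∃ x ≠ 0, X = span ℂ {x} := by
  obtain ⟨x, hxX, hx0⟩ := exists_mem_ne_zero_of_ne_bot (p := X) (by rintro rfl; simp at hX)
  exact ⟨x, hx0, eq_span_singleton_of_mem_of_finrank_eq_one hX hxX hx0⟩

lemma finrank_inf_eq_one (hV : finrank ℂ V = 3) {H H' : Submodule ℂ V}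
    (hH : finrank ℂ H = 2) (hH' : finrank ℂ H' = 2) {u : V} (hu : u ∈ H') (hu' : u ∉ H) :
    finrank ℂ ↥(H ⊓ H') = 1 := by
  have : FiniteDimensional ℂ V := Module.finite_of_finrank_eq_succ hV
  have hlt : H < H ⊔ H' := lt_of_le_of_ne le_sup_left fun h => hu' (h ▸ mem_sup_right hu)
  have := Submodule.finrank_lt_finrank_of_lt hlt
  have := Submodule.finrank_le (H ⊔ H')
  have := Submodule.finrank_sup_add_finrank_inf_eq H H'
  omega

variable (hV : finrank ℂ V = 3)
include hV

lemma span_singleton_mem_arrLatIn_of_mem_of_mem (hA : ∀ H ∈ A, finrank ℂ H = 2) {y u : V}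
    (hy : y ≠ 0) {H H' : Submodule ℂ V} (hH : H ∈ A) (hH' : H' ∈ A) (hyH : y ∈ H)
    (hyH' : y ∈ H') (hu : u ∈ H') (hu' : u ∉ H) : span ℂ {y} ∈ ArrLatIn ⊤ A := by
  have : FiniteDimensional ℂ V := Module.finite_of_finrank_eq_succ hV
  rw [eq_of_le_of_finrank_eq ((span_singleton_le_iff_mem _ _).2 (mem_inf.2 ⟨hyH, hyH'⟩))
    (by rw [finrank_span_singleton hy, finrank_inf_eq_one hV (hA H hH) (hA H' hH') hu hu'])]
  exact inf_mem_arrLatIn hH hH'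

lemma ModularIn.exists_mem_mem_of_span_mem {x y : V}
    (hmod : ModularIn (ArrLatIn ⊤ A) (span ℂ {x})) (hy : span ℂ {y} ∈ ArrLatIn ⊤ A) :
    ∃ H ∈ A, x ∈ H ∧ y ∈ H := by
  have : FiniteDimensional ℂ V := Module.finite_of_finrank_eq_succ hV
  have hne : span ℂ {x} ⊔ span ℂ {y} ≠ ⊤ := by
    intro htop
    have := Submodule.finrank_add_le_finrank_add_finrank (span ℂ {x}) (span ℂ {y})
    have hx : finrank ℂ (span ℂ {x}) ≤ 1 := (finrank_span_le_card ({x} : Set V)).trans (by simp)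
    have hy : finrank ℂ (span ℂ {y}) ≤ 1 := (finrank_span_le_card ({y} : Set V)).trans (by simp)
    rw [htop, finrank_top] at this
    omega
  obtain ⟨H, hH, hle⟩ := exists_mem_le_of_mem_arrLatIn (hmod.2 _ hy) hne
  exact ⟨H, hH, hle (mem_sup_left (mem_span_singleton_self x)),
    hle (mem_sup_right (mem_span_singleton_self y))⟩

lemma modularIn_of_forall_exists_mem (hA : ∀ H ∈ A, finrank ℂ H = 2) {X : Submodule ℂ V}
    (hX : X ∈ ArrLatIn ⊤ A) (hX1 : finrank ℂ X = 1)
    (h : ∀ y : V, y ≠ 0 → span ℂ {y} ∈ ArrLatIn ⊤ A → ∃ H ∈ A, X ≤ H ∧ y ∈ H) :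
    ModularIn (ArrLatIn ⊤ A) X := by
  have : FiniteDimensional ℂ V := Module.finite_of_finrank_eq_succ hV
  refine ⟨hX, fun Y hY => ?_⟩
  by_cases hXY : X ≤ Y
  · rwa [sup_eq_right.2 hXY]
  have hrank : finrank ℂ ↥(X ⊔ Y) = finrank ℂ Y + 1 := by
    have := Submodule.finrank_lt_finrank_of_lt
      (lt_of_le_of_ne inf_le_left fun h => hXY (inf_eq_left.1 h) : X ⊓ Y < X)
    have := Submodule.finrank_sup_add_finrank_inf_eq X Y
    omega
  have := Submodule.finrank_le (X ⊔ Y)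
  rcases (by omega : finrank ℂ Y = 0 ∨ finrank ℂ Y = 1 ∨ finrank ℂ Y = 2) with hY0 | hY1 | hY2
  · rwa [← eq_of_le_of_finrank_eq (le_sup_left : X ≤ X ⊔ Y) (by omega)]
  · obtain ⟨y, hy0, rfl⟩ := exists_eq_span_singleton_of_finrank_eq_one hY1
    obtain ⟨H, hH, hXH, hyH⟩ := h y hy0 hY
    have hle : X ⊔ span ℂ {y} ≤ H := sup_le hXH ((span_singleton_le_iff_mem _ _).2 hyH)
    rw [eq_of_le_of_finrank_eq hle (by rw [hA H hH]; omega)]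
    exact mem_arrLatIn_of_mem hH
  · rw [eq_top_of_finrank_eq (S := X ⊔ Y) (by omega)]
    exact top_mem_arrLatIn

end RankThree

section Arrangement

variable {r ℓ k : ℕ}

@[simp] lemma mem_coordH {i : Fin ℓ} {z : Fin ℓ → ℂ} : z ∈ coordH ℓ i ↔ z i = 0 := Iff.rfl

@[simp] lemma mem_diffH {i j : Fin ℓ} {ζ : ℂ} {z : Fin ℓ → ℂ} :
    z ∈ diffH ℓ i j ζ ↔ z i = ζ * z j := by
  simp [diffH, sub_eq_zero]

lemma ne_zero_of_pow_eq_one (hr : r ≠ 0) {ζ : ℂ} (hζ : ζ ^ r = 1) : ζ ≠ 0 := by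
  rintro rfl
  simp [hr] at hζ

lemma exists_pow_eq_one_ne (hr : 2 ≤ r) (c : ℂ) : ∃ ζ : ℂ, ζ ^ r = 1 ∧ ζ ≠ c := by
  have hprim := Complex.isPrimitiveRoot_exp r (by omega)
  by_cases hc : c = 1
  · exact ⟨_, hprim.pow_eq_one, hc ▸ hprim.ne_one (by omega)⟩
  · exact ⟨1, one_pow r, Ne.symm hc⟩

lemma finrank_ker_eq_of_apply_ne_zero {f : (Fin ℓ → ℂ) →ₗ[ℂ] ℂ} {z : Fin ℓ → ℂ} (hz : f z ≠ 0) :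
    finrank ℂ (LinearMap.ker f) = ℓ - 1 := by
  have := Module.Dual.finrank_ker_add_one_of_ne_zero (f := f) fun hf => hz (by simp [hf])
  rw [finrank_fin_fun] at this
  omega

lemma finrank_coordH (i : Fin ℓ) : finrank ℂ (coordH ℓ i) = ℓ - 1 :=
  finrank_ker_eq_of_apply_ne_zero (z := Pi.single i 1) (by simp)

lemma finrank_diffH {i j : Fin ℓ} (hij : i ≠ j) (ζ : ℂ) : finrank ℂ (diffH ℓ i j ζ) = ℓ - 1 :=
  finrank_ker_eq_of_apply_ne_zero (z := Pi.single i 1) (by simp [hij.symm])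

lemma finrank_of_mem_interArr {H : Submodule ℂ (Fin ℓ → ℂ)} (hH : H ∈ interArr r ℓ k) :
    finrank ℂ H = ℓ - 1 := by
  rcases hH with ⟨i, -, rfl⟩ | ⟨i, j, hij, ζ, -, rfl⟩
  exacts [finrank_coordH i, finrank_diffH hij.ne ζ]

lemma coordH_mem_interArr_iff (hr : r ≠ 0) {n : Fin ℓ} :
    coordH ℓ n ∈ interArr r ℓ k ↔ (n : ℕ) < k := by
  refine ⟨?_, fun h => Or.inl ⟨n, h, rfl⟩⟩
  rintro (⟨m, hm, hnm⟩ | ⟨i, j, hij, ζ, hζ, hD⟩)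
  · obtain rfl : n = m := by
      by_contra hne
      have := (SetLike.ext_iff.1 hnm (Pi.single n 1)).2
      simp [Ne.symm hne] at this
    exact hm
  · have hζ0 := ne_zero_of_pow_eq_one hr hζ
    exfalso
    by_cases hni : n = i
    · have := (SetLike.ext_iff.1 hD (Pi.single j 1)).1
      simp [hni, hij.ne', hζ0.symm] at this
    · have := (SetLike.ext_iff.1 hD (Pi.single i 1)).1
      simp [Ne.symm hni, hij.ne] at this

lemma exists_mem_interArr_forall_mem_iff (hr : r ≠ 0) {i j : Fin ℓ} (hij : i ≠ j) {ζ : ℂ}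
    (hζ : ζ ^ r = 1) : ∃ H ∈ interArr r ℓ k, ∀ z, z ∈ H ↔ z i = ζ * z j := by
  rcases hij.lt_or_gt with h | h
  · exact ⟨diffH ℓ i j ζ, Or.inr ⟨i, j, h, ζ, hζ, rfl⟩, fun z => mem_diffH⟩
  · refine ⟨diffH ℓ j i ζ⁻¹, Or.inr ⟨j, i, h, ζ⁻¹, by rw [inv_pow, hζ, inv_one], rfl⟩,
      fun z => ?_⟩
    have hζ0 := ne_zero_of_pow_eq_one hr hζ
    rw [mem_diffH, eq_inv_mul_iff_mul_eq₀ hζ0, eq_comm]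

lemma coordH_inf_sup_span_single {i j : Fin ℓ} (hij : i ≠ j) :
    coordH ℓ i ⊓ coordH ℓ j ⊔ span ℂ {Pi.single i 1} = coordH ℓ j := by
  refine le_antisymm (sup_le inf_le_right ((span_singleton_le_iff_mem _ _).2 ?_)) fun z hz => ?_
  · simp [hij.symm]
  · refine mem_sup.2 ⟨z - z i • Pi.single i 1, ?_, z i • Pi.single i 1,
      smul_mem _ _ (mem_span_singleton_self _), sub_add_cancel _ _⟩
    simp_all [hij.symm]

lemma notMem_of_mul_ne_mul {u v : Fin ℓ → ℂ} (hzero : ∀ n, u n ≠ 0 ∨ v n ≠ 0)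
    (hminor : ∀ a b, a ≠ b → u a * v b ≠ u b * v a) {H : Submodule ℂ (Fin ℓ → ℂ)}
    (hH : H ∈ interArr r ℓ k) (hu : u ∈ H) : v ∉ H := by
  rcases hH with ⟨n, -, rfl⟩ | ⟨a, b, hab, ζ, -, rfl⟩
  · rw [mem_coordH] at hu ⊢
    exact (hzero n).resolve_left (not_not.2 hu)
  · rw [mem_diffH] at hu ⊢
    exact fun hv => hminor a b hab.ne (by rw [hu, hv]; ring)

lemma exists_eq_mul_of_span_mem (hr : r ≠ 0) {y : Fin ℓ → ℂ}
    (hy : span ℂ {y} ∈ ArrLatIn ⊤ (interArr r ℓ k)) {i b : Fin ℓ} (hbi : b ≠ i)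
    (hyi : y i ≠ 0) (hyb : y b ≠ 0) : ∃ c ≠ i, ∃ ζ : ℂ, ζ ^ r = 1 ∧ y i = ζ * y c := by
  by_contra! h
  have hmem : Pi.single i (1 : ℂ) ∈ span ℂ {y} := by
    refine mem_of_forall_mem_imp hy (mem_span_singleton_self y) ?_
    rintro H (⟨n, -, rfl⟩ | ⟨a, c, hac, ζ, hζ, rfl⟩) hyH
    · have hni : n ≠ i := by rintro rfl; exact hyi hyH
      simp [hni]
    · rw [mem_diffH] at hyH ⊢
      by_cases hai : a = i
      · subst hai
        exact absurd hyH (h c hac.ne' ζ hζ)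
      by_cases hci : c = i
      · subst hci
        have hζ0 := ne_zero_of_pow_eq_one hr hζ
        refine absurd ?_ (h a hai ζ⁻¹ (by rw [inv_pow, hζ, inv_one]))
        rw [hyH, inv_mul_cancel_left₀ hζ0]
      · simp [hai, hci]
  obtain ⟨t, ht⟩ := mem_span_singleton.1 hmem
  have hb := congrFun ht b
  have hi := congrFun ht i
  simp [hbi, hyb] at hb hi
  simp [hb] at hi

end Arrangement

section ThreeSpace

variable {r k : ℕ}

lemma finrank_eq_two_of_mem_interArr {H : Submodule ℂ (Fin 3 → ℂ)} (hH : H ∈ interArr r 3 k) :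
    finrank ℂ H = 2 :=
  finrank_of_mem_interArr hH

lemma finrank_coordH_inf {i j : Fin 3} (hij : i ≠ j) :
    finrank ℂ ↥(coordH 3 i ⊓ coordH 3 j) = 1 :=
  finrank_inf_eq_one (finrank_fin_fun ℂ) (finrank_coordH i) (finrank_coordH j)
    (u := Pi.single i 1) (by simp [hij.symm]) (by simp)

lemma exists_pow_eq_one_eq_mul_of_span_mem (hr : r ≠ 0) {y : Fin 3 → ℂ}
    (hy : span ℂ {y} ∈ ArrLatIn ⊤ (interArr r 3 k)) {i j : Fin 3} (hij : i ≠ j)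
    (hyi : y i ≠ 0) (hyj : y j ≠ 0) : ∃ ζ : ℂ, ζ ^ r = 1 ∧ y i = ζ * y j := by
  obtain ⟨b, hbi, ζ, hζ, hib⟩ := exists_eq_mul_of_span_mem hr hy hij.symm hyi hyj
  by_cases hbj : b = j
  · exact ⟨ζ, hζ, hbj ▸ hib⟩
  have hyb : y b ≠ 0 := fun h0 => hyi (by rw [hib, h0, mul_zero])
  obtain ⟨c, hcj, η, hη, hjc⟩ := exists_eq_mul_of_span_mem hr hy hbj hyj hyb
  have hη0 := ne_zero_of_pow_eq_one hr hη
  by_cases hci : c = i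
  · subst hci
    exact ⟨η⁻¹, by rw [inv_pow, hη, inv_one], by rw [hjc, inv_mul_cancel_left₀ hη0]⟩
  · -- both `b` and `c` are the index of `Fin 3` other than `i` and `j`
    obtain rfl : c = b := by omega
    refine ⟨ζ * η⁻¹, by rw [mul_pow, inv_pow, hζ, hη, inv_one, one_mul], ?_⟩
    rw [hib, hjc, mul_assoc, inv_mul_cancel_left₀ hη0]

lemma modularIn_coordH_inf (hr : r ≠ 0) {i j : Fin 3} (hij : i < j) (hi : (i : ℕ) < k)
    (hj : (j : ℕ) < k) : ModularIn (ArrLatIn ⊤ (interArr r 3 k)) (coordH 3 i ⊓ coordH 3 j) := by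
  have hHi : coordH 3 i ∈ interArr r 3 k := Or.inl ⟨i, hi, rfl⟩
  have hHj : coordH 3 j ∈ interArr r 3 k := Or.inl ⟨j, hj, rfl⟩
  refine modularIn_of_forall_exists_mem (finrank_fin_fun ℂ)
    (fun H => finrank_eq_two_of_mem_interArr) (inf_mem_arrLatIn hHi hHj)
    (finrank_coordH_inf hij.ne) fun y _ hy => ?_
  by_cases hyi : y i = 0
  · exact ⟨_, hHi, inf_le_left, hyi⟩
  by_cases hyj : y j = 0
  · exact ⟨_, hHj, inf_le_right, hyj⟩
  obtain ⟨ζ, hζ, hyζ⟩ := exists_pow_eq_one_eq_mul_of_span_mem hr hy hij.ne hyi hyj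
  refine ⟨diffH 3 i j ζ, Or.inr ⟨i, j, hij, ζ, hζ, rfl⟩, fun z hz => ?_, mem_diffH.2 hyζ⟩
  obtain ⟨hzi, hzj⟩ := mem_inf.1 hz
  simp_all

lemma lt_of_modularIn_coordH_inf (hr : 2 ≤ r) {i j : Fin 3} (hij : i ≠ j)
    (hmod : ModularIn (ArrLatIn ⊤ (interArr r 3 k)) (coordH 3 i ⊓ coordH 3 j)) :
    (j : ℕ) < k := by
  have hr0 : r ≠ 0 := by omega
  obtain ⟨l, hli, hlj⟩ : ∃ l : Fin 3, l ≠ i ∧ l ≠ j := by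
    have : ∀ i j : Fin 3, ∃ l : Fin 3, l ≠ i ∧ l ≠ j := by decide
    exact this i j
  obtain ⟨ζ, hζ, hζ1⟩ := exists_pow_eq_one_ne hr 1
  obtain ⟨D, hD, hDmem⟩ := exists_mem_interArr_forall_mem_iff (k := k) hr0 hlj.symm (one_pow r)
  obtain ⟨D', hD', hD'mem⟩ := exists_mem_interArr_forall_mem_iff (k := k) hr0 hlj.symm hζ
  have hline : span ℂ {Pi.single i 1} ∈ ArrLatIn ⊤ (interArr r 3 k) :=
    span_singleton_mem_arrLatIn_of_mem_of_mem (finrank_fin_fun ℂ)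
      (fun H => finrank_eq_two_of_mem_interArr) (by simp) hD' hD
      ((hD'mem _).2 (by simp [hij.symm, hli])) ((hDmem _).2 (by simp [hij.symm, hli]))
      (u := Pi.single j 1 + Pi.single l 1) ((hDmem _).2 (by simp [hlj, hlj.symm]))
      fun h => hζ1 (by simpa [hlj, hlj.symm] using ((hD'mem _).1 h).symm)
  have hsup := coordH_inf_sup_span_single (ℓ := 3) hij
  obtain ⟨H, hH, hle⟩ := exists_mem_le_of_mem_arrLatIn (hmod.2 _ hline) (by
    rw [hsup]
    intro htop
    simpa using (SetLike.ext_iff.1 htop (Pi.single j 1)).2 trivial)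
  rw [hsup] at hle
  have hHj : coordH 3 j = H :=
    eq_of_le_of_finrank_eq hle (by rw [finrank_coordH, finrank_eq_two_of_mem_interArr hH])
  exact (coordH_mem_interArr_iff hr0).1 (hHj ▸ hH)

lemma mul_ne_mul_of_eq_zero {u v : Fin 3 → ℂ} {a b m : Fin 3} (hab : a ≠ b) (ham : a ≠ m)
    (hbm : b ≠ m) (hum : u m = 0) (hua : u a ≠ 0) (hub : u b ≠ 0) (hv : ∀ n, v n ≠ 0)
    (hminor : u a * v b ≠ u b * v a) : ∀ c d, c ≠ d → u c * v d ≠ u d * v c := by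
  have cover : ∀ n, n = a ∨ n = b ∨ n = m := by omega
  intro c d hcd
  rcases cover c with rfl | rfl | rfl <;> rcases cover d with rfl | rfl | rfl <;>
    first
      | exact absurd rfl hcd
      | exact hminor
      | exact Ne.symm hminor
      | simp [hum, hua, hub, hv]

lemma not_modularIn_span_of_forall_ne_zero (hr : 2 ≤ r) (hk : 1 ≤ k) {x : Fin 3 → ℂ}
    (hx : ∀ n, x n ≠ 0) : ¬ ModularIn (ArrLatIn ⊤ (interArr r 3 k)) (span ℂ {x}) := by
  intro hmod
  obtain ⟨ζ, hζ, hζx⟩ := exists_pow_eq_one_ne hr (x 1 / x 2)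
  have hζ0 := ne_zero_of_pow_eq_one (by omega) hζ
  have hy : span ℂ {![0, ζ, 1]} ∈ ArrLatIn ⊤ (interArr r 3 k) :=
    span_singleton_mem_arrLatIn_of_mem_of_mem (finrank_fin_fun ℂ)
      (fun H => finrank_eq_two_of_mem_interArr) (by simp)
      (Or.inr ⟨1, 2, by decide, ζ, hζ, rfl⟩) (Or.inl ⟨0, by simpa, rfl⟩) (by simp) (by simp)
      (u := ![0, 1, 0]) (by simp) (by simp)
  obtain ⟨H, hH, hxH, hyH⟩ := hmod.exists_mem_mem_of_span_mem (finrank_fin_fun ℂ) hy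
  refine notMem_of_mul_ne_mul (fun n => Or.inr (hx n))
    (mul_ne_mul_of_eq_zero (a := 1) (b := 2) (m := 0) (by decide) (by decide) (by decide)
      rfl (by simpa using hζ0) (by simp) hx ?_) hH hyH hxH
  simpa using fun h => hζx ((eq_div_iff (hx 2)).2 h)

lemma not_modularIn_span_of_eq_zero (hr : 2 ≤ r) {x : Fin 3 → ℂ} {m : Fin 3} (hxm : x m = 0)
    (hx : ∀ n ≠ m, x n ≠ 0) : ¬ ModularIn (ArrLatIn ⊤ (interArr r 3 k)) (span ℂ {x}) := by
  intro hmod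
  have hr0 : r ≠ 0 := by omega
  obtain ⟨a, b, hab, ham, hbm⟩ : ∃ a b : Fin 3, a ≠ b ∧ a ≠ m ∧ b ≠ m := by
    have : ∀ m : Fin 3, ∃ a b : Fin 3, a ≠ b ∧ a ≠ m ∧ b ≠ m := by decide
    exact this m
  obtain ⟨ζ, hζ, hζx⟩ := exists_pow_eq_one_ne hr (x a / x b)
  obtain ⟨D, hD, hDmem⟩ := exists_mem_interArr_forall_mem_iff (k := k) hr0 ham hζ
  obtain ⟨D', hD', hD'mem⟩ := exists_mem_interArr_forall_mem_iff (k := k) hr0 hbm (one_pow r)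
  set y : Fin 3 → ℂ := fun n => if n = a then ζ else 1
  have hy0 : ∀ n, y n ≠ 0 := fun n => by
    simp only [y]
    split_ifs
    exacts [ne_zero_of_pow_eq_one hr0 hζ, one_ne_zero]
  have hy : span ℂ {y} ∈ ArrLatIn ⊤ (interArr r 3 k) :=
    span_singleton_mem_arrLatIn_of_mem_of_mem (finrank_fin_fun ℂ)
      (fun H => finrank_eq_two_of_mem_interArr) (fun h => hy0 a (congrFun h a)) hD' hD
      ((hD'mem y).2 (by simp [y, hab.symm, ham.symm])) ((hDmem y).2 (by simp [y, ham.symm]))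
      (u := Pi.single b 1) ((hDmem _).2 (by simp [hab, hbm.symm]))
      fun h => by simpa [hbm.symm] using (hD'mem _).1 h
  obtain ⟨H, hH, hxH, hyH⟩ := hmod.exists_mem_mem_of_span_mem (finrank_fin_fun ℂ) hy
  refine notMem_of_mul_ne_mul (fun n => Or.inr (hy0 n))
    (mul_ne_mul_of_eq_zero hab ham hbm hxm (hx a ham) (hx b hbm) hy0 ?_) hH hxH hyH
  simpa [y, hab.symm] using fun h => hζx ((eq_div_iff (hx b hbm)).2 (by rw [h, mul_comm]))

lemma exists_lt_of_modularIn_coordH_inf (hr : 2 ≤ r) {i j : Fin 3} (hij : i ≠ j)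
    (hmod : ModularIn (ArrLatIn ⊤ (interArr r 3 k)) (coordH 3 i ⊓ coordH 3 j)) :
    ∃ i' j' : Fin 3, i' < j' ∧ (i' : ℕ) < k ∧ (j' : ℕ) < k ∧
      coordH 3 i ⊓ coordH 3 j = coordH 3 i' ⊓ coordH 3 j' := by
  have hj := lt_of_modularIn_coordH_inf hr hij hmod
  have hi := lt_of_modularIn_coordH_inf hr hij.symm (inf_comm (coordH 3 i) _ ▸ hmod)
  rcases hij.lt_or_gt with h | h
  · exact ⟨i, j, h, hi, hj, rfl⟩
  · exact ⟨j, i, h, hj, hi, inf_comm _ _⟩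

end ThreeSpace

theorem stmt_8_general (r k : ℕ) (hr : 2 ≤ r) (hk1 : 1 ≤ k)
    (X : Submodule ℂ (Fin 3 → ℂ))
    (hdim : Module.finrank ℂ ↥X = 1) :
    ModularIn (ArrLatIn ⊤ (interArr r 3 k)) X ↔
      ∃ i j : Fin 3, i < j ∧ (i : ℕ) < k ∧ (j : ℕ) < k ∧ X = coordH 3 i ⊓ coordH 3 j := by
  constructor
  · intro hmod
    obtain ⟨x, -, rfl⟩ := exists_eq_span_singleton_of_finrank_eq_one hdim
    by_cases htwo : ∃ i j, i ≠ j ∧ x i = 0 ∧ x j = 0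
    · obtain ⟨i, j, hij, hxi, hxj⟩ := htwo
      have hX : span ℂ {x} = coordH 3 i ⊓ coordH 3 j :=
        eq_of_le_of_finrank_eq ((span_singleton_le_iff_mem _ _).2 ⟨hxi, hxj⟩)
          (by rw [hdim, finrank_coordH_inf hij])
      rw [hX] at hmod ⊢
      exact exists_lt_of_modularIn_coordH_inf hr hij hmod
    push Not at htwo
    by_cases hzero : ∃ m, x m = 0
    · obtain ⟨m, hm⟩ := hzero
      exact absurd hmod (not_modularIn_span_of_eq_zero hr hm fun n hn hxn => htwo n m hn hxn hm)
    push Not at hzero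
    exact absurd hmod (not_modularIn_span_of_forall_ne_zero hr hk1 hzero)
  · rintro ⟨i, j, hij, hi, hj, rfl⟩
    exact modularIn_coordH_inf (by omega) hij hi hj

/-- In `A = A^k_3(r)` with `1 ≤ k ≤ 3`, `r ≥ 2`, a dimension-1 element `X ∈ L(A)`
is modular iff `X = H_i ∩ H_j` for some coordinate hyperplanes `H_i, H_j` with `i < j ≤ k`. -/
theorem stmt_8 (r k : ℕ) (hr : 2 ≤ r) (hk1 : 1 ≤ k) (hk3 : k ≤ 3)
    (X : Submodule ℂ (Fin 3 → ℂ)) (hX : X ∈ ArrLatIn ⊤ (interArr r 3 k))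
    (hdim : Module.finrank ℂ ↥X = 1) :
    ModularIn (ArrLatIn ⊤ (interArr r 3 k)) X ↔
      ∃ i j : Fin 3, i < j ∧ (i : ℕ) < k ∧ (j : ℕ) < k ∧ X = coordH 3 i ⊓ coordH 3 j :=
  stmt_8_general r k hr hk1 X hdim
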